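/- arXiv:2103.11420 — 5 statements merged into one kernel-verified Lean document; each statement's English description precedes it below -/
import Mathlib

section
/- For every vertex v of the Cayley graph C_{F_q^d}(E) and every good k-energy tuple (a_1,...,a_k,b_1,...,b_k) of elements of E, the sequence v, v+a_1, v+a_1+a_2, ..., v+a_1+...+a_k, v+Σa_i−b_1, ..., v+Σa_i−Σ_{i=1}^{k-1}b_i is a cycle of length 2k in C_{F_q^d}(E) with pairwise distinct vertices. Consequently, the number of 2k-cycles with distinct vertices through v is at least the number of good k-energy tuples in E. -/
/-!
After `j` steps the walk sits at `v + ∑_{x < j} a x - ∑_{x < j - k} b x`. Two of its first `2k`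
positions coincide exactly when a block of consecutive `a`'s has the same sum as a block of
consecutive `b`'s, and the two blocks are neither both empty nor both everything, which goodness
forbids. The tuple is read off from the steps of the walk, so distinct good tuples give distinct
cycles.
-/

open Finset

namespace EnergyCycle

variable {V : Type*} [AddCommGroup V] {k : ℕ}

def IsGoodTuple (a b : Fin k → V) : Prop :=
  ∀ I J : Finset (Fin k), ¬(I = ∅ ∧ J = ∅) → ¬(I = univ ∧ J = univ) →
    ∑ i ∈ I, a i ≠ ∑ j ∈ J, b j

def partialSum (f : Fin k → V) (j : ℕ) : V :=
  ∑ i ∈ univ.filter (fun i : Fin k => (i : ℕ) < j), f i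

theorem partialSum_zero (f : Fin k → V) : partialSum f 0 = 0 := by
  simp [partialSum]

theorem partialSum_of_le (f : Fin k → V) {j : ℕ} (h : k ≤ j) :
    partialSum f j = ∑ i, f i := by
  rw [partialSum, filter_true_of_mem fun i _ => i.isLt.trans_le h]

theorem partialSum_succ (f : Fin k → V) {j : ℕ} (h : j < k) :
    partialSum f (j + 1) = partialSum f j + f ⟨j, h⟩ := by
  have hset : univ.filter (fun i : Fin k => (i : ℕ) < j + 1)
      = insert ⟨j, h⟩ (univ.filter fun i : Fin k => (i : ℕ) < j) := by
    ext x
    simp only [mem_filter, mem_univ, true_and, mem_insert, Fin.ext_iff]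
    omega
  rw [partialSum, hset, sum_insert (by simp), add_comm]
  rfl

theorem partialSum_sub_partialSum (f : Fin k → V) {i j : ℕ} (h : i ≤ j) :
    partialSum f j - partialSum f i =
      ∑ x ∈ univ.filter (fun x : Fin k => i ≤ (x : ℕ) ∧ (x : ℕ) < j), f x := by
  rw [sub_eq_iff_eq_add', partialSum, partialSum,
    ← sum_filter_add_sum_filter_not _ (fun x : Fin k => (x : ℕ) < i), filter_filter,
    filter_filter]
  congr 2 <;> ext x <;> simp only [mem_filter, mem_univ, true_and] <;> omega

/-- Position of the walk after `j` steps: the `b`-part vanishes for `j ≤ k` because `j - k`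
truncates to `0`, and for `2k ≤ j` the walk has returned to `v` when `∑ a = ∑ b`. -/
def walk (v : V) (a b : Fin k → V) (j : ℕ) : V :=
  v + partialSum a j - partialSum b (j - k)

theorem walk_eq_ite (v : V) (a b : Fin k → V) (j : ℕ) :
    walk v a b j = if j ≤ k then v + partialSum a j
      else v + (∑ i, a i) - partialSum b (j - k) := by
  split_ifs with h
  · rw [walk, Nat.sub_eq_zero_of_le h, partialSum_zero, sub_zero]
  · rw [walk, partialSum_of_le a (by omega)]

theorem walk_zero (v : V) (a b : Fin k → V) : walk v a b 0 = v := by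
  simp [walk, partialSum_zero]

theorem walk_of_two_mul_le (v : V) {a b : Fin k → V} (hsum : ∑ i, a i = ∑ i, b i) {j : ℕ}
    (h : 2 * k ≤ j) : walk v a b j = v := by
  rw [walk, partialSum_of_le a (by omega), partialSum_of_le b (by omega), hsum,
    add_sub_cancel_right]

theorem walk_succ_sub_walk (v : V) (a b : Fin k → V) (i : Fin k) :
    walk v a b (i + 1) - walk v a b i = a i := by
  rw [walk, walk, Nat.sub_eq_zero_of_le i.isLt, Nat.sub_eq_zero_of_le i.isLt.le,
    partialSum_succ a i.isLt]
  abel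

theorem walk_sub_walk_succ (v : V) (a b : Fin k → V) (i : Fin k) :
    walk v a b (k + i) - walk v a b (k + i + 1) = b i := by
  rw [walk, walk, Nat.add_sub_cancel_left, add_assoc, Nat.add_sub_cancel_left,
    partialSum_succ b i.isLt, partialSum_of_le a (by omega), partialSum_of_le a (by omega)]
  abel

theorem walk_succ_sub_walk_mem {E : Finset V} (hsym : ∀ x ∈ E, -x ∈ E) (v : V)
    {a b : Fin k → V} (ha : ∀ i, a i ∈ E) (hb : ∀ i, b i ∈ E) {j : ℕ} (hj : j < 2 * k) :
    walk v a b (j + 1) - walk v a b j ∈ E := by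
  rcases lt_or_ge j k with hjk | hjk
  · convert ha ⟨j, hjk⟩ using 1
    exact walk_succ_sub_walk v a b ⟨j, hjk⟩
  · obtain ⟨i, rfl⟩ := Nat.exists_eq_add_of_le hjk
    convert hsym _ (hb ⟨i, by omega⟩) using 1
    rw [← walk_sub_walk_succ v a b ⟨i, by omega⟩, neg_sub]

theorem walk_sub_walk (v : V) (a b : Fin k → V) {i j : ℕ} (h : i ≤ j) :
    walk v a b j - walk v a b i =
      ∑ x ∈ univ.filter (fun x : Fin k => i ≤ (x : ℕ) ∧ (x : ℕ) < j), a x -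
      ∑ x ∈ univ.filter (fun x : Fin k => i - k ≤ (x : ℕ) ∧ (x : ℕ) < j - k), b x := by
  rw [← partialSum_sub_partialSum a h, ← partialSum_sub_partialSum b (Nat.sub_le_sub_right h k),
    walk, walk]
  abel

theorem walk_injOn (v : V) {a b : Fin k → V} (hgood : IsGoodTuple a b) :
    Set.InjOn (walk v a b) (Set.Iio (2 * k)) := by
  suffices ∀ {i j : ℕ}, i < j → j < 2 * k → walk v a b i ≠ walk v a b j by
    intro i hi j hj heq
    by_contra hne
    rcases lt_or_gt_of_ne hne with h | h
    exacts [this h hj heq, this h hi heq.symm]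
  intro i j hij hj heq
  have hblocks := walk_sub_walk v a b hij.le
  rw [heq, sub_self, eq_comm, sub_eq_zero] at hblocks
  refine hgood _ _ ?_ ?_ hblocks
  · rintro ⟨hI, hJ⟩
    rw [filter_eq_empty_iff] at hI hJ
    rcases lt_or_ge i k with hik | hik
    · exact hI (mem_univ ⟨i, hik⟩) ⟨le_rfl, hij⟩
    · exact hJ (mem_univ ⟨i - k, by omega⟩) ⟨le_rfl, by simp only; omega⟩
  · rintro ⟨-, hJ⟩
    have hlast : (⟨k - 1, by omega⟩ : Fin k) ∈
        univ.filter (fun x : Fin k => i - k ≤ (x : ℕ) ∧ (x : ℕ) < j - k) := by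
      rw [hJ]
      exact mem_univ _
    simp only [mem_filter, mem_univ, true_and] at hlast
    omega

theorem walk_injective (v : V) :
    Function.Injective fun p : (Fin k → V) × (Fin k → V) => walk v p.1 p.2 := by
  rintro ⟨a, b⟩ ⟨a', b'⟩ (heq : walk v a b = walk v a' b')
  refine Prod.ext (funext fun i => show a i = a' i from ?_)
    (funext fun i => show b i = b' i from ?_)
  · rw [← walk_succ_sub_walk v a b i, heq, walk_succ_sub_walk]
  · rw [← walk_sub_walk_succ v a b i, heq, walk_sub_walk_succ]

/-- Such a walk is determined by its first `n` steps, which lie in the finite set `E`. -/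
theorem finite_setOf_walk (E : Finset V) (v : V) (n : ℕ) :
    {c : ℕ → V | c 0 = v ∧ (∀ j, n ≤ j → c j = v) ∧
      ∀ j < n, c (j + 1) - c j ∈ E}.Finite := by
  let steps : (ℕ → V) → Fin n → V := fun c i => c (i + 1) - c i
  refine Set.Finite.of_finite_image (f := steps)
    ((Set.Finite.pi fun _ => E.finite_toSet).subset ?_) ?_
  · rintro _ ⟨c, ⟨-, -, hc⟩, rfl⟩ i -
    exact hc i i.isLt
  · rintro c ⟨hc0, hcn, -⟩ c' ⟨hc0', hcn', -⟩ heq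
    have hle : ∀ j ≤ n, c j = c' j := by
      intro j hj
      induction j with
      | zero => rw [hc0, hc0']
      | succ j ih =>
        have hstep := congrFun heq ⟨j, hj⟩
        simp only [steps] at hstep
        rw [← sub_add_cancel (c (j + 1)) (c j), hstep, ih (by omega), sub_add_cancel]
    funext j
    rcases le_or_gt j n with hj | hj
    · exact hle j hj
    · rw [hcn j hj.le, hcn' j hj.le]

end EnergyCycle

open EnergyCycle in
theorem stmt_4_general {F : Type*} [Field F] (d k : ℕ)
    (E : Finset (Fin d → F)) (hsym : ∀ x ∈ E, -x ∈ E) (h0 : (0 : Fin d → F) ∉ E)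
    (v : Fin d → F) (a b : Fin k → (Fin d → F))
    (ha : ∀ i, a i ∈ E) (hb : ∀ i, b i ∈ E)
    (hsum : ∑ i, a i = ∑ i, b i)
    (hgood : ∀ I J : Finset (Fin k), ¬(I = ∅ ∧ J = ∅) →
      ¬(I = Finset.univ ∧ J = Finset.univ) →
      ∑ i ∈ I, a i ≠ ∑ j ∈ J, b j)
    (w : ℕ → (Fin d → F))
    (hw : ∀ j : ℕ, w j =
      if j ≤ k then v + ∑ i ∈ Finset.univ.filter (fun i : Fin k => (i : ℕ) < j), a i
      else v + (∑ i, a i) - ∑ i ∈ Finset.univ.filter (fun i : Fin k => (i : ℕ) < j - k), b i) :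
    (w 0 = v ∧ w (2 * k) = v ∧
      (∀ j < 2 * k, w (j + 1) - w j ∈ E ∧ w j ≠ w (j + 1)) ∧
      (∀ i < 2 * k, ∀ j < 2 * k, i ≠ j → w i ≠ w j)) ∧
    Set.ncard {p : (Fin k → (Fin d → F)) × (Fin k → (Fin d → F)) |
        (∀ i, p.1 i ∈ E) ∧ (∀ i, p.2 i ∈ E) ∧ (∑ i, p.1 i = ∑ i, p.2 i) ∧
        ∀ I J : Finset (Fin k), ¬(I = ∅ ∧ J = ∅) →
          ¬(I = Finset.univ ∧ J = Finset.univ) →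
          ∑ i ∈ I, p.1 i ≠ ∑ j ∈ J, p.2 j} ≤
      Set.ncard {c : ℕ → (Fin d → F) |
        c 0 = v ∧ c (2 * k) = v ∧ (∀ j, 2 * k ≤ j → c j = v) ∧
        (∀ j < 2 * k, c (j + 1) - c j ∈ E) ∧
        (∀ i < 2 * k, ∀ j < 2 * k, i ≠ j → c i ≠ c j)} := by
  obtain rfl : w = walk v a b := funext fun j => (hw j).trans (walk_eq_ite v a b j).symm
  have hedge := fun j (hj : j < 2 * k) => walk_succ_sub_walk_mem hsym v ha hb hj
  refine ⟨⟨walk_zero v a b, walk_of_two_mul_le v hsum le_rfl,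
    fun j hj => ⟨hedge j hj, fun heq => h0 (sub_self (walk v a b j) ▸ heq ▸ hedge j hj)⟩,
    fun i hi j hj hne heq => hne (walk_injOn v hgood hi hj heq)⟩, ?_⟩
  refine Set.ncard_le_ncard_of_injOn _ ?_ (walk_injective v).injOn
    ((finite_setOf_walk E v (2 * k)).subset fun c hc => ⟨hc.1, hc.2.2.1, hc.2.2.2.1⟩)
  rintro p ⟨hpa, hpb, hpsum, hpgood⟩
  exact ⟨walk_zero v _ _, walk_of_two_mul_le v hpsum le_rfl,
    fun j hj => walk_of_two_mul_le v hpsum hj,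
    fun j hj => walk_succ_sub_walk_mem hsym v hpa hpb hj,
    fun i hi j hj hne heq => hne (walk_injOn v hpgood hi hj heq)⟩

/-- Every good `k`-energy tuple `(a_1,...,a_k,b_1,...,b_k)` of elements of a symmetric
set `E` (with `0 ∉ E`) gives, for each vertex `v`, the cycle
`v, v+a_1, ..., v+a_1+⋯+a_k, v+∑a_i−b_1, ..., v+∑a_i−∑_{i≤k-1}b_i` of length `2k` in the
Cayley graph of `E`, with pairwise distinct vertices; consequently, the number of
`2k`-cycles with distinct vertices through `v` is at least the number of good
`k`-energy tuples in `E`. -/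
theorem stmt_4 {F : Type*} [Field F] [Fintype F] [DecidableEq F] (d k : ℕ) (hk : 2 ≤ k)
    (E : Finset (Fin d → F)) (hsym : ∀ x ∈ E, -x ∈ E) (h0 : (0 : Fin d → F) ∉ E)
    (v : Fin d → F) (a b : Fin k → (Fin d → F))
    (ha : ∀ i, a i ∈ E) (hb : ∀ i, b i ∈ E)
    (hsum : ∑ i, a i = ∑ i, b i)
    (hgood : ∀ I J : Finset (Fin k), ¬(I = ∅ ∧ J = ∅) →
      ¬(I = Finset.univ ∧ J = Finset.univ) →
      ∑ i ∈ I, a i ≠ ∑ j ∈ J, b j)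
    (w : ℕ → (Fin d → F))
    (hw : ∀ j : ℕ, w j =
      if j ≤ k then v + ∑ i ∈ Finset.univ.filter (fun i : Fin k => (i : ℕ) < j), a i
      else v + (∑ i, a i) - ∑ i ∈ Finset.univ.filter (fun i : Fin k => (i : ℕ) < j - k), b i) :
    (w 0 = v ∧ w (2 * k) = v ∧
      (∀ j < 2 * k, w (j + 1) - w j ∈ E ∧ w j ≠ w (j + 1)) ∧
      (∀ i < 2 * k, ∀ j < 2 * k, i ≠ j → w i ≠ w j)) ∧
    Set.ncard {p : (Fin k → (Fin d → F)) × (Fin k → (Fin d → F)) |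
        (∀ i, p.1 i ∈ E) ∧ (∀ i, p.2 i ∈ E) ∧ (∑ i, p.1 i = ∑ i, p.2 i) ∧
        ∀ I J : Finset (Fin k), ¬(I = ∅ ∧ J = ∅) →
          ¬(I = Finset.univ ∧ J = Finset.univ) →
          ∑ i ∈ I, p.1 i ≠ ∑ j ∈ J, p.2 j} ≤
      Set.ncard {c : ℕ → (Fin d → F) |
        c 0 = v ∧ c (2 * k) = v ∧ (∀ j, 2 * k ≤ j → c j = v) ∧
        (∀ j < 2 * k, c (j + 1) - c j ∈ E) ∧
        (∀ i < 2 * k, ∀ j < 2 * k, i ≠ j → c i ≠ c j)} :=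
  stmt_4_general d k E hsym h0 v a b ha hb hsum hgood w hw
end

section
/- Let G be a d-regular graph on n vertices whose adjacency matrix has all nontrivial eigenvalues of absolute value at most μ. Then for any two vertex subsets U, W, |e(U,W) − d|U||W|/n| ≤ μ √(|U||W|), where e(U,W) counts pairs (u,w) ∈ U×W that are adjacent. -/
/-!
Split the indicator vectors as `1_U = (|U|/n) 𝟙 + x` and `1_W = (|W|/n) 𝟙 + y` with `x`, `y`
orthogonal to the constants. Regularity makes `𝟙` an eigenvector of the symmetric matrix `A`, so
every cross term collapses and `e(U,W) - d|U||W|/n = ⟨x, A y⟩`. The spectral hypothesis bounds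
this by `μ ‖x‖ ‖y‖`, and `‖x‖² = |U| - |U|²/n ≤ |U|`.
-/

open Finset Matrix

section

variable {V : Type*} [Fintype V]

theorem Matrix.indicator_dotProduct_mulVec_indicator {R : Type*} [NonAssocSemiring R]
    (M : Matrix V V R) (s t : Finset V) :
    (s : Set V).indicator 1 ⬝ᵥ M *ᵥ (t : Set V).indicator 1 = ∑ i ∈ s, ∑ j ∈ t, M i j := by
  classical
  simp only [dotProduct, mulVec, Set.indicator_apply, SetLike.mem_coe, Pi.one_apply, mul_ite,
    mul_one, mul_zero, sum_ite_mem, univ_inter, ite_mul, one_mul, zero_mul]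

noncomputable def centeredIndicator (s : Finset V) : V → ℝ :=
  (s : Set V).indicator (1 : V → ℝ) - Function.const V ((#s : ℝ) / Fintype.card V)

theorem sum_indicator_one_eq_card (s : Finset V) :
    ∑ v, (s : Set V).indicator (1 : V → ℝ) v = #s := by
  classical
  simp only [Set.indicator_apply, SetLike.mem_coe, Pi.one_apply, sum_ite_mem, univ_inter,
    sum_const, nsmul_eq_mul, mul_one]

theorem sum_centeredIndicator (s : Finset V) : ∑ v, centeredIndicator s v = 0 := by
  have hs : (#s : ℝ) ≤ Fintype.card V := by exact_mod_cast card_le_univ s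
  simp only [centeredIndicator, Pi.sub_apply, sum_sub_distrib, sum_indicator_one_eq_card,
    Function.const_apply, sum_const, card_univ, nsmul_eq_mul]
  rcases eq_or_ne (Fintype.card V : ℝ) 0 with hn | hn
  · simp only [hn, zero_mul, sub_zero]
    exact le_antisymm (hn ▸ hs) (Nat.cast_nonneg _)
  · rw [mul_div_cancel₀ _ hn, sub_self]

theorem dotProduct_centeredIndicator {x : V → ℝ} (hx : ∑ v, x v = 0) (s : Finset V) :
    x ⬝ᵥ centeredIndicator s = ∑ v ∈ s, x v := by
  classical
  simp only [centeredIndicator, dotProduct, Pi.sub_apply, Function.const_apply, mul_sub,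
    sum_sub_distrib, ← sum_mul, hx, zero_mul, sub_zero, Set.indicator_apply, SetLike.mem_coe,
    Pi.one_apply, mul_ite, mul_one, mul_zero, sum_ite_mem, univ_inter]

theorem sum_centeredIndicator_sq_le (s : Finset V) : ∑ v, centeredIndicator s v ^ 2 ≤ #s := by
  have hsq : ∑ v, centeredIndicator s v ^ 2 = #s - #s * (#s / Fintype.card V) := by
    simp only [sq]
    rw [← dotProduct, dotProduct_centeredIndicator (sum_centeredIndicator s),
      sum_congr rfl fun v hv => by
        rw [centeredIndicator, Pi.sub_apply, Set.indicator_of_mem (mem_coe.2 hv)]]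
    simp only [Pi.one_apply, Function.const_apply, sum_sub_distrib, sum_const, nsmul_eq_mul,
      mul_one]
  rw [hsq]
  have hnonneg : (0 : ℝ) ≤ #s * (#s / Fintype.card V) := by positivity
  linarith

namespace SimpleGraph

variable {G : SimpleGraph V} [DecidableRel G.Adj] {R : Type*} {d : ℕ}

theorem natCast_card_filter_adj_eq_dotProduct [NonAssocSemiring R] (U W : Finset V) :
    (#{p ∈ U ×ˢ W | G.Adj p.1 p.2} : R) =
      (U : Set V).indicator 1 ⬝ᵥ G.adjMatrix R *ᵥ (W : Set V).indicator 1 := by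
  rw [indicator_dotProduct_mulVec_indicator, card_filter, Nat.cast_sum, sum_product]
  simp only [adjMatrix_apply, Nat.cast_ite, Nat.cast_one, Nat.cast_zero]

theorem IsRegularOfDegree.adjMatrix_mulVec_const [NonAssocSemiring R]
    (h : G.IsRegularOfDegree d) (c : R) :
    G.adjMatrix R *ᵥ Function.const V c = Function.const V (d * c) :=
  funext fun _ => adjMatrix_mulVec_const_apply_of_regular h

theorem IsRegularOfDegree.dotProduct_adjMatrix_mulVec_const [CommSemiring R]
    (h : G.IsRegularOfDegree d) (x : V → R) (c : R) :
    x ⬝ᵥ G.adjMatrix R *ᵥ Function.const V c = d * c * ∑ i, x i := by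
  rw [h.adjMatrix_mulVec_const, dotProduct_comm, dotProduct, mul_sum]
  rfl

theorem IsRegularOfDegree.const_dotProduct_adjMatrix_mulVec [CommSemiring R]
    (h : G.IsRegularOfDegree d) (x : V → R) (c : R) :
    Function.const V c ⬝ᵥ G.adjMatrix R *ᵥ x = d * c * ∑ i, x i := by
  rw [dotProduct_mulVec, ← mulVec_transpose, transpose_adjMatrix, dotProduct_comm,
    h.dotProduct_adjMatrix_mulVec_const]

theorem IsRegularOfDegree.centeredIndicator_dotProduct_adjMatrix_mulVec
    (h : G.IsRegularOfDegree d) (U W : Finset V) :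
    centeredIndicator U ⬝ᵥ G.adjMatrix ℝ *ᵥ centeredIndicator W =
      #{p ∈ U ×ˢ W | G.Adj p.1 p.2} - d * #U * #W / Fintype.card V := by
  rw [centeredIndicator.eq_1 W, mulVec_sub, dotProduct_sub, h.dotProduct_adjMatrix_mulVec_const,
    sum_centeredIndicator, centeredIndicator, sub_dotProduct, h.const_dotProduct_adjMatrix_mulVec,
    sum_indicator_one_eq_card, natCast_card_filter_adj_eq_dotProduct]
  ring

end SimpleGraph

end

theorem stmt_5_general {V : Type*} [Fintype V]
    (G : SimpleGraph V) [DecidableRel G.Adj] (d : ℕ)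
    (hreg : G.IsRegularOfDegree d) (μ : ℝ) (hμ0 : 0 ≤ μ)
    (hμ : ∀ f g : V → ℝ, (∑ v, f v = 0) → (∑ v, g v = 0) →
      |∑ v, f v * ((G.adjMatrix ℝ).mulVec g) v| ≤
        μ * Real.sqrt (∑ v, (f v) ^ 2) * Real.sqrt (∑ v, (g v) ^ 2))
    (U W : Finset V) :
    |((((U ×ˢ W).filter (fun p : V × V => G.Adj p.1 p.2)).card : ℝ) -
        (d : ℝ) * U.card * W.card / (Fintype.card V : ℝ))| ≤
      μ * Real.sqrt ((U.card : ℝ) * W.card) := by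
  rw [← hreg.centeredIndicator_dotProduct_adjMatrix_mulVec]
  calc _ ≤ μ * √(∑ v, centeredIndicator U v ^ 2) * √(∑ v, centeredIndicator W v ^ 2) :=
        hμ _ _ (sum_centeredIndicator U) (sum_centeredIndicator W)
    _ ≤ μ * √(#U : ℝ) * √(#W : ℝ) := by
        gcongr <;> exact sum_centeredIndicator_sq_le _
    _ = μ * √((#U : ℝ) * #W) := by
        rw [mul_assoc, Real.sqrt_mul (Nat.cast_nonneg _)]

/-- Expander mixing lemma: if `G` is a `d`-regular graph on `n` vertices whose
adjacency matrix satisfies the spectral bound `μ` on the orthogonal complement of the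
constants (i.e. all nontrivial eigenvalues have absolute value at most `μ`, expressed via
the bilinear form on mean-zero vectors), then for any vertex sets `U`, `W`,
`|e(U,W) − d|U||W|/n| ≤ μ √(|U||W|)`. -/
theorem stmt_5 {V : Type*} [Fintype V] [DecidableEq V]
    (G : SimpleGraph V) [DecidableRel G.Adj] (d : ℕ)
    (hreg : G.IsRegularOfDegree d) (μ : ℝ) (hμ0 : 0 ≤ μ)
    (hμ : ∀ f g : V → ℝ, (∑ v, f v = 0) → (∑ v, g v = 0) →
      |∑ v, f v * ((G.adjMatrix ℝ).mulVec g) v| ≤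
        μ * Real.sqrt (∑ v, (f v) ^ 2) * Real.sqrt (∑ v, (g v) ^ 2))
    (U W : Finset V) :
    |((((U ×ˢ W).filter (fun p : V × V => G.Adj p.1 p.2)).card : ℝ) -
        (d : ℝ) * U.card * W.card / (Fintype.card V : ℝ))| ≤
      μ * Real.sqrt ((U.card : ℝ) * W.card) :=
  stmt_5_general G d hreg μ hμ0 hμ U W
end

section
/- For d > n ≥ 2, the number L of tuples (v_0,...,v_n) ∈ (S^{d−1})^{n+1} such that for some 1 ≤ i ≤ n, v_i − v_0 lies in the set {Σ_{j≠i} a_j (v_j − v_0) : all a_j ∈ F_q^*} satisfies L ≪ |S^{d−1}|^{n+1}/q^2, i.e., L ≤ C(n) q^{(d−1)(n+1)−2} for an absolute constant C(n). -/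
/-- The unit sphere `S^{d-1}` in `F^d`. -/
def sphereFin (F : Type*) [CommRing F] [Fintype F] [DecidableEq F] (d : ℕ) :
    Finset (Fin d → F) :=
  Finset.univ.filter (fun x => ∑ i, (x i) ^ 2 = 1)

/-!
Fix `i ≠ 0` and let `J` be the set of the other nonzero indices. A bad tuple is determined by its
coefficients `a`, the vectors `v_j` (`j ∈ J`) and `x = v_0`, since `v_i = λ x + u` with
`λ = 1 - ∑ a_j` and `u = ∑ a_j v_j`. Subtracting `|x|² = 1` from `|λ x + u|² = 1` leaves the linear
equation `2λ x·u = 1 - λ² - |u|²`. When `2λu ≠ 0` this is a hyperplane, which meets the sphere in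
`|S|/q + O(q^{(d-1)/2}) = O(q^{d-2})` points by the Fourier bound. In the degenerate cases `λ = 0`
and `u = 0` the point `x` is free, but then `a`, respectively the `v_j`, satisfy a nontrivial linear
equation and lose a free coordinate; since `n < d` this still saves `q²` over `|S|^{n+1}`.

In characteristic two the sphere is the hyperplane `∑ x_k = 1`, whose Fourier coefficient at
`(1, …, 1)` has size `q^{d-1}`; the Fourier bound then forces `q ≤ Cf`, and the trivial bound
`|S|^{n+1}` suffices.
-/

open Finset

section CountingFunctions

variable {ι : Type*} [Fintype ι] [DecidableEq ι]

def piOn {β : Type*} [Zero β] [DecidableEq β] (J : Finset ι) (s : Finset β) : Finset (ι → β) :=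
  Fintype.piFinset fun j => if j ∈ J then s else {0}

section piOn

variable {β : Type*} [Zero β] [DecidableEq β] {J : Finset ι} {s : Finset β} {f : ι → β}

theorem mem_piOn : f ∈ piOn J s ↔ (∀ j ∈ J, f j ∈ s) ∧ ∀ j ∉ J, f j = 0 := by
  simp only [piOn, Fintype.mem_piFinset]
  refine ⟨fun h => ⟨fun j hj => by simpa [hj] using h j, fun j hj => by simpa [hj] using h j⟩,
    fun h j => ?_⟩
  by_cases hj : j ∈ J <;> simp [hj, h.1, h.2]

theorem card_piOn : #(piOn J s) = #s ^ #J := by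
  simp only [piOn, Fintype.card_piFinset, apply_ite card, card_singleton]
  rw [prod_ite, prod_const, prod_const_one, mul_one, filter_mem_eq_inter, univ_inter]

end piOn

/-- A solution of the equation is determined by its coordinates other than `j₀`. -/
theorem card_filter_sum_smul_eq_le {K M : Type*} [Field K] [AddCommGroup M] [Module K M]
    [DecidableEq M] {J : Finset ι} (s : Finset M) (c : ι → K) {j₀ : ι} (hj₀ : j₀ ∈ J)
    (hc : c j₀ ≠ 0) (b : M) :
    #{f ∈ piOn J s | ∑ j ∈ J, c j • f j = b} ≤ #s ^ (#J - 1) := by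
  rw [← card_erase_of_mem hj₀, ← card_piOn]
  refine card_le_card_of_injOn (Function.update · j₀ 0) (fun f hf => ?_)
    fun f hf g hg hfg => ?_
  · obtain ⟨hfs, hf0⟩ := mem_piOn.1 (mem_filter.1 hf).1
    refine mem_coe.2 <| mem_piOn.2 ⟨fun j hj => ?_, fun j hj => ?_⟩ <;> dsimp only
    · rw [Function.update_of_ne (ne_of_mem_erase hj)]
      exact hfs j (mem_of_mem_erase hj)
    · by_cases h : j = j₀
      · simp [h]
      · rw [Function.update_of_ne h]
        exact hf0 j fun hJ => hj (mem_erase.2 ⟨h, hJ⟩)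
  · have hoff : ∀ j ≠ j₀, f j = g j := fun j hj => by
      simpa [Function.update_of_ne hj] using congrFun hfg j
    have hsolve : ∀ h ∈ ({f ∈ piOn J s | ∑ j ∈ J, c j • f j = b} : Finset _),
        c j₀ • h j₀ = b - ∑ j ∈ J.erase j₀, c j • h j := fun h hh => by
      rw [← (mem_filter.1 hh).2, ← add_sum_erase _ _ hj₀, add_sub_cancel_right]
    have hrest : ∑ j ∈ J.erase j₀, c j • f j = ∑ j ∈ J.erase j₀, c j • g j :=
      sum_congr rfl fun j hj => by rw [hoff j (ne_of_mem_erase hj)]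
    funext j
    by_cases h : j = j₀
    · subst h
      apply smul_right_injective M hc
      simp only [hsolve f hf, hsolve g hg, hrest]
    · exact hoff j h

end CountingFunctions

theorem sum_le_card_filter_mul_add_card_mul {α : Type*} (s : Finset α) (p : α → Prop)
    [DecidablePred p] (f : α → ℝ) {M N : ℝ} (hM : ∀ x ∈ s, p x → f x ≤ M)
    (hN : ∀ x ∈ s, ¬p x → f x ≤ N) (hN0 : 0 ≤ N) :
    ∑ x ∈ s, f x ≤ #{x ∈ s | p x} * M + #s * N := by
  rw [← sum_filter_add_sum_filter_not s p]
  refine add_le_add ((sum_le_card_nsmul _ _ M fun x hx => ?_).trans (nsmul_eq_mul _ _).le)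
    ((sum_le_card_nsmul _ _ N fun x hx => ?_).trans ?_)
  · exact hM x (mem_filter.1 hx).1 (mem_filter.1 hx).2
  · exact hN x (mem_filter.1 hx).1 (mem_filter.1 hx).2
  · rw [nsmul_eq_mul]
    gcongr
    exact filter_subset _ _

theorem sub_eq_sum_smul_sub_iff {ι R M : Type*} [Ring R] [AddCommGroup M] [Module R M]
    (s : Finset ι) (a : ι → R) (x y : M) (z : ι → M) :
    y - x = ∑ j ∈ s, a j • (z j - x) ↔ y = (1 - ∑ j ∈ s, a j) • x + ∑ j ∈ s, a j • z j := by
  simp_rw [smul_sub, sum_sub_distrib, ← sum_smul, sub_smul, one_smul, sub_eq_iff_eq_add]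
  constructor <;> rintro rfl <;> abel

section Hyperplanes

variable {F : Type*} [Field F] [Fintype F] [DecidableEq F]

theorem card_filter_eq_le_of_addChar {α : Type*} {ψ : AddChar F ℂ} (hψ : ψ ≠ 1)
    (s : Finset α) (f : α → F) (c : F) {B : ℝ}
    (hB : ∀ t ≠ 0, ‖∑ x ∈ s, ψ (t * f x)‖ ≤ B) :
    (#{x ∈ s | f x = c} : ℝ) ≤ #s / Fintype.card F + B := by
  have hq : (0 : ℝ) < Fintype.card F := by exact_mod_cast Fintype.card_pos
  have hB0 : 0 ≤ B := (norm_nonneg _).trans (hB 1 one_ne_zero)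
  have horth : (#{x ∈ s | f x = c} : ℂ) * Fintype.card F
      = ∑ t : F, (∑ x ∈ s, ψ (t * f x)) * ψ (-(t * c)) := by
    simp_rw [sum_mul, ← AddChar.map_add_eq_mul, ← sub_eq_add_neg, ← mul_sub]
    rw [sum_comm]
    simp_rw [AddChar.sum_mulShift _ (AddChar.IsPrimitive.of_ne_one hψ), sub_eq_zero]
    push_cast
    rw [sum_ite, sum_const_zero, add_zero, sum_const, nsmul_eq_mul]
  have hnorm : ‖(#{x ∈ s | f x = c} : ℂ) * Fintype.card F‖ ≤ #s + Fintype.card F * B := by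
    rw [horth, ← add_sum_erase _ _ (mem_univ 0)]
    refine (norm_add_le _ _).trans (add_le_add (by simp) ?_)
    refine (norm_sum_le _ _).trans ((sum_le_card_nsmul _ _ B fun t ht => ?_).trans ?_)
    · rw [norm_mul, AddChar.norm_apply, mul_one]
      exact hB t (ne_of_mem_erase ht)
    · rw [nsmul_eq_mul]
      gcongr
      exact_mod_cast card_le_univ _
  rw [norm_mul, Complex.norm_natCast, Complex.norm_natCast] at hnorm
  rw [div_add' _ _ _ hq.ne', le_div_iff₀ hq]
  linarith

variable {d : ℕ}

theorem mem_sphereFin_iff {x : Fin d → F} : x ∈ sphereFin F d ↔ x ⬝ᵥ x = 1 := by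
  simp [sphereFin, dotProduct, sq]

theorem dotProduct_smul_eq_of_mem_sphereFin {c : F} {x u : Fin d → F} (hx : x ∈ sphereFin F d)
    (hcx : c • x + u ∈ sphereFin F d) : x ⬝ᵥ ((2 * c) • u) = 1 - c ^ 2 - u ⬝ᵥ u := by
  rw [mem_sphereFin_iff] at hx hcx
  simp only [add_dotProduct, dotProduct_add, smul_dotProduct, dotProduct_smul, smul_eq_mul,
    dotProduct_comm u x, hx] at hcx ⊢
  linear_combination hcx

theorem card_filter_smul_add_mem_sphereFin_le {ψ : AddChar F ℂ} (hψ : ψ ≠ 1) (h2 : (2 : F) ≠ 0)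
    {B : ℝ} (hB : ∀ m ≠ 0, ‖∑ x ∈ sphereFin F d, ψ (x ⬝ᵥ m)‖ ≤ B) {c : F} {u : Fin d → F}
    (hc : c ≠ 0) (hu : u ≠ 0) :
    (#{x ∈ sphereFin F d | c • x + u ∈ sphereFin F d} : ℝ) ≤
      #(sphereFin F d) / Fintype.card F + B := by
  refine (Nat.cast_le.2 (card_le_card fun x hx => ?_)).trans
    (card_filter_eq_le_of_addChar hψ _ (· ⬝ᵥ ((2 * c) • u)) (1 - c ^ 2 - u ⬝ᵥ u) fun t ht => ?_)
  · obtain ⟨hx, hcx⟩ := mem_filter.1 hx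
    exact mem_filter.2 ⟨hx, dotProduct_smul_eq_of_mem_sphereFin hx hcx⟩
  · simp_rw [← smul_eq_mul t, ← dotProduct_smul]
    exact hB _ (smul_ne_zero ht (smul_ne_zero (mul_ne_zero h2 hc) hu))

theorem pow_card_le_norm_sum_sphereFin_of_ringChar_eq_two (h2 : ringChar F = 2)
    (ψ : AddChar F ℂ) : (Fintype.card F : ℝ) ^ d ≤ ‖∑ x ∈ sphereFin F (d + 1), ψ (x ⬝ᵥ 1)‖ := by
  have : CharP F 2 := h2 ▸ ringChar.charP F
  have hmem : ∀ {x : Fin (d + 1) → F}, x ∈ sphereFin F (d + 1) ↔ ∑ i, x i = 1 := by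
    intro x
    rw [sphereFin, mem_filter, ← sum_pow_char]
    exact ⟨fun h => frobenius_inj F 2 (h.2.trans (one_pow 2).symm),
      fun h => ⟨mem_univ _, by simp [h]⟩⟩
  have hcard : Fintype.card F ^ d ≤ #(sphereFin F (d + 1)) := by
    rw [show Fintype.card F ^ d = #(univ : Finset (Fin d → F)) by simp]
    refine card_le_card_of_injOn (fun y => Fin.cons (1 - ∑ j, y j) y) (fun y _ => ?_)
      fun y _ z _ hyz => by simpa using congrArg Fin.tail hyz
    simp [hmem, Fin.sum_cons]
  rw [sum_congr rfl fun x hx => by rw [dotProduct_one, hmem.1 hx], sum_const, nsmul_eq_mul,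
    norm_mul, AddChar.norm_apply, mul_one, Complex.norm_natCast]
  exact_mod_cast hcard

end Hyperplanes

section Exponents

theorem rpow_sub_one_div_two_le_pow_sub_two {Q : ℝ} (hQ : 1 ≤ Q) {d : ℕ} (hd : 3 ≤ d) :
    Q ^ (((d : ℝ) - 1) / 2) ≤ Q ^ (d - 2) := by
  rw [← Real.rpow_natCast, Nat.cast_sub (by omega : 2 ≤ d)]
  apply Real.rpow_le_rpow_of_exponent_le hQ
  have : (3 : ℝ) ≤ d := by exact_mod_cast hd
  push_cast
  linarith

theorem le_of_pow_sub_one_le_mul_rpow {Q C : ℝ} (hQ : 1 ≤ Q) {d : ℕ} (hd : 3 ≤ d)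
    (h : Q ^ (d - 1) ≤ C * Q ^ (((d : ℝ) - 1) / 2)) : Q ≤ C := by
  have hsq : Q ^ (d - 1) = Q ^ (((d : ℝ) - 1) / 2) * Q ^ (((d : ℝ) - 1) / 2) := by
    rw [← Real.rpow_add (by linarith), ← Real.rpow_natCast, Nat.cast_sub (by omega : 1 ≤ d)]
    norm_num
  have hd' : (3 : ℝ) ≤ d := by exact_mod_cast hd
  calc Q = Q ^ (1 : ℝ) := (Real.rpow_one Q).symm
    _ ≤ Q ^ (((d : ℝ) - 1) / 2) := Real.rpow_le_rpow_of_exponent_le hQ (by linarith)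
    _ ≤ C := le_of_mul_le_mul_right (hsq ▸ h) (Real.rpow_pos_of_pos (by linarith) _)

theorem pow_mul_pow_add_le {Q s Cf : ℝ} (hQ : 1 ≤ Q) (hs₀ : 0 ≤ s) {n d : ℕ}
    (hs : s ≤ 2 * Q ^ (d - 1)) (hCf : 0 ≤ Cf) (hn : 2 ≤ n) (hnd : n < d) :
    Q ^ (n - 2) * s ^ n + Q ^ (n - 1) * s ^ (n - 1) * (1 + (2 + Cf) * Q ^ (d - 2)) ≤
      2 ^ n * (3 + Cf) * Q ^ ((d - 1) * (n + 1) - 2) := by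
  obtain ⟨m, rfl⟩ : ∃ m, n = m + 2 := ⟨n - 2, by omega⟩
  obtain ⟨e, rfl⟩ : ∃ e, d = e + 3 := ⟨d - 3, by omega⟩
  simp only [Nat.add_sub_cancel, show m + 2 - 1 = m + 1 by omega,
    show e + 3 - 1 = e + 2 by omega, show e + 3 - 2 = e + 1 by omega] at hs ⊢
  have hpow : ∀ k, s ^ k ≤ 2 ^ k * Q ^ ((e + 2) * k) := fun k =>
    (pow_le_pow_left₀ hs₀ hs k).trans_eq (by rw [mul_pow, ← pow_mul])
  have h1 : 1 ≤ Q ^ (e + 1) := one_le_pow₀ hQ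
  have hE₁ : Q ^ m * Q ^ ((e + 2) * (m + 2)) ≤ Q ^ ((e + 2) * (m + 2 + 1) - 2) := by
    rw [← pow_add]; exact pow_le_pow_right₀ hQ (by ring_nf; omega)
  have hE₂ : Q ^ (m + 1) * Q ^ ((e + 2) * (m + 1)) * Q ^ (e + 1) ≤
      Q ^ ((e + 2) * (m + 2 + 1) - 2) := by
    rw [← pow_add, ← pow_add]; exact pow_le_pow_right₀ hQ (by ring_nf; omega)
  calc Q ^ m * s ^ (m + 2) + Q ^ (m + 1) * s ^ (m + 1) * (1 + (2 + Cf) * Q ^ (e + 1))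
      ≤ Q ^ m * (2 ^ (m + 2) * Q ^ ((e + 2) * (m + 2))) +
          Q ^ (m + 1) * (2 ^ (m + 1) * Q ^ ((e + 2) * (m + 1))) * ((3 + Cf) * Q ^ (e + 1)) := by
        gcongr
        · exact hpow _
        · exact hpow _
        · linarith
    _ = 2 ^ (m + 2) * (Q ^ m * Q ^ ((e + 2) * (m + 2))) +
          2 ^ (m + 1) * (3 + Cf) * (Q ^ (m + 1) * Q ^ ((e + 2) * (m + 1)) * Q ^ (e + 1)) := by
        ring
    _ ≤ 2 ^ (m + 2) * Q ^ ((e + 2) * (m + 2 + 1) - 2) +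
          2 ^ (m + 1) * (3 + Cf) * Q ^ ((e + 2) * (m + 2 + 1) - 2) := by
        gcongr
    _ ≤ 2 ^ (m + 2) * (3 + Cf) * Q ^ ((e + 2) * (m + 2 + 1) - 2) := by
        rw [pow_succ 2 (m + 1)]
        have : 0 ≤ (2 : ℝ) ^ (m + 1) * Q ^ ((e + 2) * (m + 2 + 1) - 2) := by positivity
        nlinarith

end Exponents

section DependentTuples

variable {ι : Type*} [Fintype ι] [DecidableEq ι] {F : Type*} [Field F] [Fintype F] [DecidableEq F]
  {V : Type*} [AddCommGroup V] [Module F V] [DecidableEq V]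

theorem sum_sum_card_filter_smul_add_mem_le (S : Finset V) {J : Finset ι} (hJ : J.Nonempty)
    {H : ℝ} (hH0 : 0 ≤ H)
    (hH : ∀ (c : F) (u : V), c ≠ 0 → u ≠ 0 → #{x ∈ S | c • x + u ∈ S} ≤ H) :
    (∑ a ∈ piOn J (univ.erase (0 : F)), ∑ w ∈ piOn J S,
        #{x ∈ S | (1 - ∑ j ∈ J, a j) • x + ∑ j ∈ J, a j • w j ∈ S} : ℝ) ≤
      Fintype.card F ^ (#J - 1) * #S ^ (#J + 1) + Fintype.card F ^ #J * #S ^ #J * (1 + H) := by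
  obtain ⟨j₀, hj₀⟩ := hJ
  have hA : #(piOn J (univ.erase (0 : F))) ≤ Fintype.card F ^ #J := by
    rw [card_piOn]
    exact Nat.pow_le_pow_left (card_le_univ _) _
  have hA₀ : #{a ∈ piOn J (univ.erase (0 : F)) | 1 - ∑ j ∈ J, a j = 0} ≤
      Fintype.card F ^ (#J - 1) := by
    have := card_filter_sum_smul_eq_le (univ.erase (0 : F)) (fun _ => (1 : F)) hj₀ one_ne_zero 1
    simp only [one_smul] at this
    simp_rw [sub_eq_zero, eq_comm (a := (1 : F))]
    exact this.trans (Nat.pow_le_pow_left (card_le_univ _) _)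
  have hW : #(piOn J S) = #S ^ #J := card_piOn
  refine (sum_le_card_filter_mul_add_card_mul _ (fun a => 1 - ∑ j ∈ J, a j = 0) _
    (M := #S ^ #J * #S) (N := #S ^ (#J - 1) * #S + #S ^ #J * H)
    (fun a _ _ => ?_) (fun a ha hlam => ?_) (by positivity)).trans ?_
  · refine (sum_le_card_nsmul _ _ (#S : ℝ) fun w _ =>
      Nat.cast_le.2 (card_filter_le _ _)).trans_eq ?_
    rw [nsmul_eq_mul, hW, Nat.cast_pow]
  · have ha₀ : a j₀ ≠ 0 := ne_of_mem_erase ((mem_piOn.1 ha).1 j₀ hj₀)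
    refine (sum_le_card_filter_mul_add_card_mul _ (fun w => ∑ j ∈ J, a j • w j = 0) _
      (M := #S) (N := H) (fun w _ _ => Nat.cast_le.2 (card_filter_le _ _))
      (fun w _ hu => ?_) hH0).trans ?_
    · exact hH _ _ hlam hu
    rw [hW]
    push_cast
    gcongr
    exact_mod_cast card_filter_sum_smul_eq_le S a hj₀ ha₀ 0
  · rw [← pow_succ, pow_sub_one_mul (card_ne_zero_of_mem hj₀), mul_assoc _ _ (1 + H),
      mul_one_add]
    gcongr ?_ * _ + ?_ * _
    · exact_mod_cast hA₀
    · exact_mod_cast hA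

variable (F) in
def dependentTuples {n : ℕ} (S : Finset V) (i : Fin (n + 1)) : Finset (Fin (n + 1) → V) :=
  {v ∈ Fintype.piFinset fun _ => S | ∃ a : Fin (n + 1) → F,
    (∀ j, j ≠ 0 → j ≠ i → a j ≠ 0) ∧
    v i - v 0 = ∑ j ∈ (univ.erase 0).erase i, a j • (v j - v 0)}

theorem card_dependentTuples_le {n : ℕ} (S : Finset V) (i : Fin (n + 1)) :
    #(dependentTuples F S i) ≤
      ∑ a ∈ piOn ((univ.erase 0).erase i) (univ.erase (0 : F)),
        ∑ w ∈ piOn ((univ.erase 0).erase i) S,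
          #{x ∈ S | (1 - ∑ j ∈ (univ.erase 0).erase i, a j) • x +
            ∑ j ∈ (univ.erase 0).erase i, a j • w j ∈ S} := by
  set J := (univ.erase (0 : Fin (n + 1))).erase i
  have hJ : ∀ {j}, j ∈ J ↔ j ≠ i ∧ j ≠ 0 := by simp [J]
  let Φ : (Fin (n + 1) → F) → (Fin (n + 1) → V) → V → Fin (n + 1) → V := fun a w x j =>
    if j = 0 then x else if j = i then (1 - ∑ j ∈ J, a j) • x + ∑ j ∈ J, a j • w j else w j
  calc #(dependentTuples F S i)
      ≤ #((piOn J (univ.erase 0)).biUnion fun a => (piOn J S).biUnion fun w =>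
          {x ∈ S | (1 - ∑ j ∈ J, a j) • x + ∑ j ∈ J, a j • w j ∈ S}.image (Φ a w)) := by
        refine card_le_card fun v hv => ?_
        obtain ⟨hvS, a, ha, hvi⟩ := mem_filter.1 hv
        rw [Fintype.mem_piFinset] at hvS
        rw [sub_eq_sum_smul_sub_iff] at hvi
        simp only [mem_biUnion, mem_image, mem_filter]
        refine ⟨J.piecewise a 0, mem_piOn.2 ⟨fun j hj => ?_, fun j hj => ?_⟩,
          J.piecewise v 0, mem_piOn.2 ⟨fun j hj => ?_, fun j hj => ?_⟩, v 0, ?_⟩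
        · rw [piecewise_eq_of_mem _ _ _ hj, mem_erase]
          exact ⟨ha j (hJ.1 hj).2 (hJ.1 hj).1, mem_univ _⟩
        · exact piecewise_eq_of_notMem _ _ _ hj
        · exact (piecewise_eq_of_mem _ _ _ hj).symm ▸ hvS j
        · exact piecewise_eq_of_notMem _ _ _ hj
        have hsum : (1 - ∑ j ∈ J, J.piecewise a 0 j) • v 0 +
            ∑ j ∈ J, J.piecewise a 0 j • J.piecewise v 0 j = v i := by
          simpa +contextual using hvi.symm
        refine ⟨⟨hvS 0, hsum ▸ hvS i⟩, funext fun j => ?_⟩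
        simp only [Φ]
        split_ifs with h0 hi
        · rw [h0]
        · rw [hi, hsum]
        · exact piecewise_eq_of_mem _ _ _ (hJ.2 ⟨hi, h0⟩)
    _ ≤ _ := card_biUnion_le.trans <| sum_le_sum fun a _ =>
          card_biUnion_le.trans <| sum_le_sum fun w _ => card_image_le

end DependentTuples

section SphereTuples

variable {F : Type*} [Field F] [Fintype F] [DecidableEq F] {n d : ℕ} {ψ : AddChar F ℂ} {Cf : ℝ}

theorem card_dependentTuples_sphereFin_le (hn : 2 ≤ n) (hnd : n < d) (hψ : ψ ≠ 1)
    (h2 : ringChar F ≠ 2) (hCf : 0 ≤ Cf)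
    (hF : ∀ m ≠ 0, ‖∑ x ∈ sphereFin F d, ψ (x ⬝ᵥ m)‖ ≤
      Cf * (Fintype.card F : ℝ) ^ (((d : ℝ) - 1) / 2))
    (hS : (#(sphereFin F d) : ℝ) ≤ 2 * (Fintype.card F : ℝ) ^ (d - 1))
    {i : Fin (n + 1)} (hi : i ≠ 0) :
    (#(dependentTuples F (sphereFin F d) i) : ℝ) ≤
      2 ^ n * (3 + Cf) * (Fintype.card F : ℝ) ^ ((d - 1) * (n + 1) - 2) := by
  have hq : (1 : ℝ) ≤ Fintype.card F := by exact_mod_cast Fintype.card_pos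
  have hJ : #((univ.erase (0 : Fin (n + 1))).erase i) = n - 1 := by
    rw [card_erase_of_mem (mem_erase.2 ⟨hi, mem_univ _⟩), card_erase_of_mem (mem_univ _),
      card_univ, Fintype.card_fin, Nat.add_sub_cancel]
  have hH : ∀ (c : F) (u : Fin d → F), c ≠ 0 → u ≠ 0 →
      (#{x ∈ sphereFin F d | c • x + u ∈ sphereFin F d} : ℝ) ≤
        (2 + Cf) * (Fintype.card F : ℝ) ^ (d - 2) := fun c u hc hu =>
    (card_filter_smul_add_mem_sphereFin_le hψ (Ring.two_ne_zero h2) hF hc hu).trans <| by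
      rw [add_mul]
      gcongr
      · rw [div_le_iff₀ (by positivity), mul_assoc, ← pow_succ,
          show d - 2 + 1 = d - 1 by omega]
        exact hS
      · exact rpow_sub_one_div_two_le_pow_sub_two hq (by omega)
  refine (Nat.cast_le.2 (card_dependentTuples_le (sphereFin F d) i)).trans ?_
  push_cast
  refine (sum_sum_card_filter_smul_add_mem_le _ (card_pos.1 (by omega)) (by positivity)
    hH).trans ?_
  rw [hJ, Nat.sub_sub, Nat.sub_add_cancel (by omega)]
  exact pow_mul_pow_add_le hq (by positivity) hS hCf hn hnd

theorem card_biUnion_dependentTuples_sphereFin_le (hn : 2 ≤ n) (hnd : n < d) (hψ : ψ ≠ 1)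
    (h2 : ringChar F ≠ 2) (hCf : 0 ≤ Cf)
    (hF : ∀ m ≠ 0, ‖∑ x ∈ sphereFin F d, ψ (x ⬝ᵥ m)‖ ≤
      Cf * (Fintype.card F : ℝ) ^ (((d : ℝ) - 1) / 2))
    (hS : (#(sphereFin F d) : ℝ) ≤ 2 * (Fintype.card F : ℝ) ^ (d - 1)) :
    (#((univ.erase 0).biUnion (dependentTuples F (sphereFin F d) (n := n))) : ℝ) ≤
      n * (2 ^ n * (3 + Cf)) * (Fintype.card F : ℝ) ^ ((d - 1) * (n + 1) - 2) := by
  refine (Nat.cast_le.2 card_biUnion_le).trans ?_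
  push_cast
  refine (sum_le_sum fun i hi => card_dependentTuples_sphereFin_le hn hnd hψ h2 hCf hF hS
    (ne_of_mem_erase hi)).trans_eq ?_
  simp [mul_assoc]

theorem card_le_of_ringChar_eq_two (h2 : ringChar F = 2) (hd : 3 ≤ d)
    (hF : ∀ m ≠ 0, ‖∑ x ∈ sphereFin F d, ψ (x ⬝ᵥ m)‖ ≤
      Cf * (Fintype.card F : ℝ) ^ (((d : ℝ) - 1) / 2)) :
    (Fintype.card F : ℝ) ≤ Cf := by
  obtain ⟨e, rfl⟩ : ∃ e, d = e + 1 := ⟨d - 1, by omega⟩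
  refine le_of_pow_sub_one_le_mul_rpow (by exact_mod_cast Fintype.card_pos) hd ?_
  rw [Nat.add_sub_cancel]
  exact (pow_card_le_norm_sum_sphereFin_of_ringChar_eq_two h2 ψ).trans (hF 1 one_ne_zero)

theorem card_biUnion_dependentTuples_sphereFin_le_of_ringChar_eq_two (hn : 2 ≤ n) (hnd : n < d)
    (h2 : ringChar F = 2)
    (hF : ∀ m ≠ 0, ‖∑ x ∈ sphereFin F d, ψ (x ⬝ᵥ m)‖ ≤
      Cf * (Fintype.card F : ℝ) ^ (((d : ℝ) - 1) / 2))
    (hS : (#(sphereFin F d) : ℝ) ≤ 2 * (Fintype.card F : ℝ) ^ (d - 1)) :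
    (#((univ.erase 0).biUnion (dependentTuples F (sphereFin F d) (n := n))) : ℝ) ≤
      2 ^ (n + 1) * Cf ^ 2 * (Fintype.card F : ℝ) ^ ((d - 1) * (n + 1) - 2) := by
  have hqC := card_le_of_ringChar_eq_two h2 (by omega) hF
  have hexp : (d - 1) * (n + 1) = 2 + ((d - 1) * (n + 1) - 2) := by
    have : 2 ≤ (d - 1) * (n + 1) := le_mul_of_le_of_one_le (by omega) (by omega)
    omega
  calc (#((univ.erase 0).biUnion (dependentTuples F (sphereFin F d) (n := n))) : ℝ)
      ≤ #(Fintype.piFinset fun _ : Fin (n + 1) => sphereFin F d) :=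
        Nat.cast_le.2 (card_le_card (biUnion_subset.2 fun i _ => filter_subset _ _))
    _ = #(sphereFin F d) ^ (n + 1) := by simp
    _ ≤ (2 * (Fintype.card F : ℝ) ^ (d - 1)) ^ (n + 1) := by gcongr
    _ = 2 ^ (n + 1) * (Fintype.card F : ℝ) ^ 2 *
          (Fintype.card F : ℝ) ^ ((d - 1) * (n + 1) - 2) := by
        rw [mul_assoc, ← pow_add, ← hexp, mul_pow, ← pow_mul]
    _ ≤ 2 ^ (n + 1) * Cf ^ 2 * (Fintype.card F : ℝ) ^ ((d - 1) * (n + 1) - 2) := by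
        gcongr

end SphereTuples

/-- For `d > n ≥ 2`, the number `L` of tuples `(v_0,...,v_n) ∈ (S^{d−1})^{n+1}` such that
for some `1 ≤ i ≤ n`, `v_i − v_0 = ∑_{j≠i} a_j (v_j − v_0)` with all `a_j ∈ F_q^*`,
satisfies `L ≤ C(n) q^{(d−1)(n+1)−2}` (assuming the standard sphere size and Fourier
decay bounds). -/
theorem stmt_9 (n : ℕ) (hn : 2 ≤ n) (Cf : ℝ) (hCf : 0 < Cf) :
    ∃ C : ℝ, 0 < C ∧ ∀ d : ℕ, n < d →
      ∀ (F : Type) [Field F] [Fintype F] [DecidableEq F],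
      ∀ (χ : AddChar F ℂ), χ ≠ 1 →
      (∀ m : Fin d → F, m ≠ 0 →
        ‖∑ x ∈ sphereFin F d, χ (∑ i, x i * m i)‖ ≤
          Cf * (Fintype.card F : ℝ) ^ (((d : ℝ) - 1) / 2)) →
      ((sphereFin F d).card : ℝ) ≤ 2 * (Fintype.card F : ℝ) ^ (d - 1) →
      (Set.ncard {v : Fin (n + 1) → (Fin d → F) |
          (∀ j, v j ∈ sphereFin F d) ∧
          ∃ i : Fin (n + 1), i ≠ 0 ∧ ∃ a : Fin (n + 1) → F,
            (∀ j : Fin (n + 1), j ≠ 0 → j ≠ i → a j ≠ 0) ∧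
            v i - v 0 = ∑ j ∈ (Finset.univ.erase 0).erase i, a j • (v j - v 0)} : ℝ) ≤
        C * (Fintype.card F : ℝ) ^ ((d - 1) * (n + 1) - 2) := by
  refine ⟨n * (2 ^ n * (3 + Cf)) + 2 ^ (n + 1) * Cf ^ 2, by positivity, ?_⟩
  intro d hnd F _ _ _ χ hχ hF hS
  refine (Nat.cast_le.2 <| (Set.ncard_le_ncard (t := ↑((univ.erase 0).biUnion
    (dependentTuples F (sphereFin F d) (n := n)))) fun v hv => ?_).trans_eq
    (Set.ncard_coe_finset _)).trans ?_
  · obtain ⟨hv, i, hi, hdep⟩ := hv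
    exact mem_biUnion.2 ⟨i, mem_erase.2 ⟨hi, mem_univ _⟩,
      mem_filter.2 ⟨Fintype.mem_piFinset.2 hv, hdep⟩⟩
  by_cases h2 : ringChar F = 2
  · refine (card_biUnion_dependentTuples_sphereFin_le_of_ringChar_eq_two hn hnd h2 hF hS).trans ?_
    gcongr
    exact le_add_of_nonneg_left (by positivity)
  · refine (card_biUnion_dependentTuples_sphereFin_le hn hnd hχ h2 hCf.le hF hS).trans ?_
    gcongr
    exact le_add_of_nonneg_right (by positivity)
end

section
/- Let E ⊆ F_q^d be symmetric with 0 ∉ E, and suppose |E+E| = K|E| < q^d/2. Then the second eigenvalue μ of the Cayley graph C_{F_q^d}(E) satisfies μ^2 ≥ c|E|^2/K for an absolute constant c > 0; in particular, if K is bounded then μ ≫ |E|. -/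
/-!
Write `S m = ∑ x ∈ E, χ (x ⬝ᵥ m)`. Orthogonality of characters gives `∑ₘ ‖S m‖² = q^d |E|` and
`∑ₘ ‖S m‖⁴ = q^d E[E, E]`, since `S m ^ 2` is the character sum over the multiset `E + E`.
Splitting off `S 0 = |E|` and bounding `‖S m‖⁴ ≤ μ² ‖S m‖²` elsewhere yields
`q^d E[E, E] ≤ |E|⁴ + μ² q^d |E|`, while Cauchy–Schwarz gives `|E|⁴ ≤ |E + E| E[E, E] = K |E| E[E, E]`.
Hence `q^d |E|³ ≤ K |E|⁴ + K μ² q^d |E|`, and `K |E| < q^d / 2` absorbs the first term on the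
right, leaving `|E|² / 2 ≤ K μ²`.
-/

open Finset Matrix Pointwise
open scoped ComplexConjugate Combinatorics.Additive

variable {F : Type*} [Field F] [Fintype F] [DecidableEq F] {ι : Type*} [Fintype ι] [DecidableEq ι]

lemma sum_addChar_dotProduct {χ : AddChar F ℂ} (hχ : χ ≠ 1) (x : ι → F) :
    ∑ m : ι → F, χ (x ⬝ᵥ m) = if x = 0 then (Fintype.card F : ℂ) ^ Fintype.card ι else 0 := by
  let ψ : AddChar (ι → F) ℂ := χ.compAddMonoidHom (AddMonoidHom.mk' (x ⬝ᵥ ·) (dotProduct_add x))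
  have hψ : ψ = 0 ↔ x = 0 := by
    refine ⟨fun h => ?_, fun h => by ext m; simp [ψ, h]⟩
    by_contra hx
    obtain ⟨j, hj⟩ := Function.ne_iff.1 hx
    obtain ⟨t, ht⟩ := AddChar.ne_one_iff.1 hχ
    have := DFunLike.congr_fun h (Pi.single j (t / x j))
    exact ht (by simpa [ψ, dotProduct_single, mul_div_cancel₀ _ hj] using this)
  have := ψ.sum_eq_ite
  simp_rw [hψ, Fintype.card_fun] at this
  exact_mod_cast this

lemma sum_norm_sq_sum_addChar_dotProduct {χ : AddChar F ℂ} (hχ : χ ≠ 1) {α : Type*}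
    (s : Finset α) (f : α → ι → F) :
    ∑ m : ι → F, ‖∑ a ∈ s, χ (f a ⬝ᵥ m)‖ ^ 2 =
      (Fintype.card F : ℝ) ^ Fintype.card ι * #{p ∈ s ×ˢ s | f p.1 = f p.2} := by
  have hexpand (m : ι → F) : (‖∑ a ∈ s, χ (f a ⬝ᵥ m)‖ : ℂ) ^ 2 =
      ∑ p ∈ s ×ˢ s, χ ((f p.1 - f p.2) ⬝ᵥ m) := by
    rw [← Complex.mul_conj', map_sum, sum_mul_sum, sum_product]
    refine sum_congr rfl fun a _ => sum_congr rfl fun b _ => ?_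
    rw [← AddChar.map_neg_eq_conj, ← AddChar.map_add_eq_mul, sub_dotProduct, sub_eq_add_neg]
  apply Complex.ofReal_injective
  push_cast
  simp_rw [hexpand]
  rw [sum_comm]
  simp_rw [sum_addChar_dotProduct hχ, sub_eq_zero]
  rw [sum_ite, sum_const_zero, add_zero, sum_const, nsmul_eq_mul, mul_comm]

lemma sum_norm_sq_sum_addChar_dotProduct_eq_card {χ : AddChar F ℂ} (hχ : χ ≠ 1)
    (E : Finset (ι → F)) :
    ∑ m : ι → F, ‖∑ x ∈ E, χ (x ⬝ᵥ m)‖ ^ 2 = (Fintype.card F : ℝ) ^ Fintype.card ι * #E := by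
  rw [← diag_card E, diag_eq_filter]
  exact sum_norm_sq_sum_addChar_dotProduct hχ E id

lemma sum_norm_pow_four_sum_addChar_dotProduct {χ : AddChar F ℂ} (hχ : χ ≠ 1)
    (E : Finset (ι → F)) :
    ∑ m : ι → F, ‖∑ x ∈ E, χ (x ⬝ᵥ m)‖ ^ 4 = (Fintype.card F : ℝ) ^ Fintype.card ι * E[E, E] := by
  have hsq (m : ι → F) : (∑ x ∈ E, χ (x ⬝ᵥ m)) ^ 2 = ∑ p ∈ E ×ˢ E, χ ((p.1 + p.2) ⬝ᵥ m) := by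
    rw [sq, sum_mul_sum, sum_product]
    simp_rw [add_dotProduct, AddChar.map_add_eq_mul]
  have hpow (m : ι → F) : ‖∑ x ∈ E, χ (x ⬝ᵥ m)‖ ^ 4 =
      ‖∑ p ∈ E ×ˢ E, χ ((p.1 + p.2) ⬝ᵥ m)‖ ^ 2 := by
    rw [← hsq, norm_pow, ← pow_mul]
  simp_rw [hpow]
  rw [sum_norm_sq_sum_addChar_dotProduct hχ, addEnergy_eq_card_filter]

lemma card_pow_mul_addEnergy_le {χ : AddChar F ℂ} (hχ : χ ≠ 1) (E : Finset (ι → F)) {μ : ℝ}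
    (hμ : ∀ m : ι → F, m ≠ 0 → ‖∑ x ∈ E, χ (x ⬝ᵥ m)‖ ≤ μ) :
    (Fintype.card F : ℝ) ^ Fintype.card ι * E[E, E] ≤
      (#E : ℝ) ^ 4 + μ ^ 2 * ((Fintype.card F : ℝ) ^ Fintype.card ι * #E) := by
  set S : (ι → F) → ℝ := fun m => ‖∑ x ∈ E, χ (x ⬝ᵥ m)‖
  have hS0 : S 0 = #E := by simp [S]
  have hpow (m : ι → F) (hm : m ≠ 0) : S m ^ 4 ≤ μ ^ 2 * S m ^ 2 := by
    have hsq : S m ^ 2 ≤ μ ^ 2 := pow_le_pow_left₀ (norm_nonneg _) (hμ m hm) 2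
    rw [show S m ^ 4 = S m ^ 2 * S m ^ 2 by ring]
    exact mul_le_mul_of_nonneg_right hsq (by positivity)
  rw [← sum_norm_pow_four_sum_addChar_dotProduct hχ, ← sum_norm_sq_sum_addChar_dotProduct_eq_card hχ]
  calc ∑ m, S m ^ 4 = S 0 ^ 4 + ∑ m ∈ univ.erase 0, S m ^ 4 := (add_sum_erase _ _ (mem_univ 0)).symm
    _ ≤ #E ^ 4 + ∑ m ∈ univ.erase 0, μ ^ 2 * S m ^ 2 := by
      rw [hS0]
      gcongr with m hm
      exact hpow m (ne_of_mem_erase hm)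
    _ ≤ #E ^ 4 + μ ^ 2 * ∑ m, S m ^ 2 := by
      rw [← mul_sum]
      gcongr
      exact erase_subset _ _

/-- There is an absolute constant `c > 0` such that: if `E ⊆ F_q^d` is symmetric with
`0 ∉ E` and `|E+E| = K|E| < q^d/2`, then the second eigenvalue bound `μ` of the Cayley
graph `C_{F_q^d}(E)` satisfies `μ² ≥ c|E|²/K`; in particular if `K` is bounded then
`μ ≫ |E|`. -/
theorem stmt_12 :
    ∃ c : ℝ, 0 < c ∧
      ∀ (F : Type) [Field F] [Fintype F] [DecidableEq F],
      ∀ (d : ℕ) (E : Finset (Fin d → F)) (K : ℝ),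
        E.Nonempty → (∀ x ∈ E, -x ∈ E) → (0 : Fin d → F) ∉ E →
        ((E + E).card : ℝ) = K * E.card →
        K * E.card < (Fintype.card F : ℝ) ^ d / 2 →
        ∀ (χ : AddChar F ℂ), χ ≠ 1 →
        ∀ μ : ℝ,
          (∀ m : Fin d → F, m ≠ 0 →
            ‖∑ x ∈ E, χ (∑ i, x i * m i)‖ ≤ μ) →
          c * (E.card : ℝ) ^ 2 / K ≤ μ ^ 2 := by
  refine ⟨1 / 2, by norm_num, fun F _ _ _ d E K hE _ _ hK hKq χ hχ μ hμ => ?_⟩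
  have hCS : (#E : ℝ) ^ 4 ≤ K * #E * E[E, E] := by
    rw [← hK, show (#E : ℝ) ^ 4 = #E ^ 2 * #E ^ 2 by ring]
    exact_mod_cast le_card_add_mul_addEnergy E E
  set N : ℝ := (Fintype.card F : ℝ) ^ d
  set e : ℝ := (#E : ℝ)
  have he : 0 < e := Nat.cast_pos.2 hE.card_pos
  have hK0 : 0 < K := by
    have : (0 : ℝ) < #(E + E) := Nat.cast_pos.2 (hE.add hE).card_pos
    exact pos_of_mul_pos_left (hK ▸ this) he.le
  have hN : 0 < N := by linarith [mul_pos hK0 he]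
  have hEnergy : N * E[E, E] ≤ e ^ 4 + μ ^ 2 * (N * e) := by
    simpa [Fintype.card_fin] using card_pow_mul_addEnergy_le hχ E (μ := μ) hμ
  have h1 := mul_le_mul_of_nonneg_left hCS hN.le
  have h2 := mul_le_mul_of_nonneg_left hEnergy (mul_pos hK0 he).le
  have h3 := mul_le_mul_of_nonneg_right hKq.le (pow_nonneg he.le 4)
  have key : N * e ^ 2 * (e ^ 2 / 2) ≤ N * e ^ 2 * (μ ^ 2 * K) := by linarith
  rw [div_le_iff₀ hK0]
  linarith [le_of_mul_le_mul_left key (by positivity)]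
end

section
/- Let H = ⋃_{a ∈ A} (X + (0,...,0,a)) where X = {x ∈ F_q^d : x_d = 0} and A ⊆ F_q with |A| = p^{r−1}, q = p^r. Then |H| = q^{d−1}·p^{r−1} and H − H ⊆ {x ∈ F_q^d : x_d ∈ A − A}, so |(H−H) ∩ S^{d−1}| ≤ |A − A| · q^{d−2} · C for |A−A| ≤ 2p^{r−1}, i.e., |(H−H) ∩ S^{d−1}| ≪ q^{d−1−1/r} when A is an arithmetic progression. -/
open Pointwise

/-- Let `q = p^r`, `A ⊆ F_q` with `|A| = p^{r−1}`, and let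
`H = ⋃_{a∈A} (X + (0,…,0,a))` where `X` is the hyperplane `x_d = 0` (i.e. `H` is the set
of points whose last coordinate lies in `A`), in ambient dimension `d+1`. Then
`|H| = q^d · |A|`, `H − H ⊆ {x : x_d ∈ A − A}`, and (given the slice bound
`|{x ∈ S : x_d = t}| ≤ Cs q^{d−1}`) `|(H−H) ∩ S| ≤ |A−A| · Cs · q^{d−1}`. -/
theorem stmt_18 {F : Type*} [Field F] [Fintype F] [DecidableEq F] (d : ℕ)
    (p r : ℕ) (hp : p.Prime) (hcard : Fintype.card F = p ^ r) (hr : 1 ≤ r)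
    (A : Finset F) (hA : A.card = p ^ (r - 1))
    (H : Finset (Fin (d + 1) → F))
    (hH : H = Finset.univ.filter (fun x : Fin (d + 1) → F => x (Fin.last d) ∈ A))
    (Cs : ℝ) (hCs : 0 < Cs)
    (hslice : ∀ t : F,
      (((sphereFin F (d + 1)).filter (fun x => x (Fin.last d) = t)).card : ℝ) ≤
        Cs * (Fintype.card F : ℝ) ^ (d - 1)) :
    H.card = Fintype.card F ^ d * A.card ∧
    (∀ x ∈ H, ∀ y ∈ H, (x - y) (Fin.last d) ∈ A - A) ∧
    (((H - H) ∩ sphereFin F (d + 1)).card : ℝ) ≤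
      ((A - A).card : ℝ) * Cs * (Fintype.card F : ℝ) ^ (d - 1) := by
  subst hH
  refine ⟨?_, ?_, ?_⟩
  · rw [show Fintype.card F ^ d * A.card = ((Finset.univ : Finset (Fin d → F)) ×ˢ A).card by
      simp [Finset.card_product, Finset.card_univ, Fintype.card_fun]]
    apply Finset.card_bij'
      (fun x _ => ((fun j => x j.castSucc, x (Fin.last d)) : (Fin d → F) × F))
      (fun y _ => Fin.snoc y.1 y.2)
    · intro x _
      funext j
      refine Fin.lastCases ?_ ?_ j
      · simp
      · intro i; simp
    · intro y _
      simp
    · intro x hx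
      simp only [Finset.mem_filter, Finset.mem_univ, true_and] at hx
      simp [Finset.mem_product, hx]
    · intro y hy
      simp only [Finset.mem_product, Finset.mem_univ, true_and] at hy
      simp [hy]
  · intro x hx y hy
    simp only [Finset.mem_filter, Finset.mem_univ, true_and] at hx hy
    exact Finset.sub_mem_sub hx hy
  · have hsub : ((Finset.univ.filter (fun x : Fin (d + 1) → F => x (Fin.last d) ∈ A)) -
        (Finset.univ.filter (fun x : Fin (d + 1) → F => x (Fin.last d) ∈ A))) ∩
        sphereFin F (d + 1) ⊆
        (A - A).biUnion (fun t => (sphereFin F (d + 1)).filter (fun x => x (Fin.last d) = t)) := by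
      intro x hx
      simp only [Finset.mem_inter] at hx
      obtain ⟨h1, h2⟩ := hx
      rw [Finset.mem_sub] at h1
      obtain ⟨a, ha, b, hb, rfl⟩ := h1
      simp only [Finset.mem_filter, Finset.mem_univ, true_and] at ha hb
      refine Finset.mem_biUnion.2 ⟨(a - b) (Fin.last d), ?_, ?_⟩
      · exact Finset.sub_mem_sub ha hb
      · simp [h2]
    calc ((((Finset.univ.filter (fun x : Fin (d + 1) → F => x (Fin.last d) ∈ A)) -
        (Finset.univ.filter (fun x : Fin (d + 1) → F => x (Fin.last d) ∈ A))) ∩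
        sphereFin F (d + 1)).card : ℝ)
        ≤ (((A - A).biUnion (fun t => (sphereFin F (d + 1)).filter
            (fun x => x (Fin.last d) = t))).card : ℝ) := by
          exact_mod_cast Finset.card_le_card hsub
      _ ≤ ∑ t ∈ A - A, (((sphereFin F (d + 1)).filter (fun x => x (Fin.last d) = t)).card : ℝ) := by
          exact_mod_cast Finset.card_biUnion_le
      _ ≤ ∑ _t ∈ A - A, Cs * (Fintype.card F : ℝ) ^ (d - 1) :=
          Finset.sum_le_sum fun t _ => hslice t
      _ = ((A - A).card : ℝ) * Cs * (Fintype.card F : ℝ) ^ (d - 1) := by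
          rw [Finset.sum_const, nsmul_eq_mul, mul_assoc]
end
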